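/- Let M ⊆ E = ℝ^N be an embedded submanifold with Q(m) the orthogonal projection onto τ_m M^⊥, and let x : [0,T] → M be a C¹ path. Let v : [0,T] → E solve the parallel translation ODE v̇(t) + (∂_{ẋ(t)} Q)(x(t)) v(t) = 0 with v(0) ∈ τ_{x(0)} M. Then Q(x(t)) v(t) = 0 for all t, i.e. v(t) ∈ τ_{x(t)} M for all t ∈ [0,T]. -/

import Mathlib

open Set

/-- Let `M ⊆ ℝ^N` be an embedded submanifold with `Q(m)` the orthogonal
projection onto `τ_m M^⊥` (smooth, self-adjoint and idempotent on `M`), and let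
`x : [0,T] → M` be a `C¹` path.  If `v : [0,T] → ℝ^N` solves the parallel translation ODE
`v̇(t) + (∂_{ẋ(t)}Q)(x(t)) v(t) = 0` with `v(0) ∈ τ_{x(0)}M` (i.e. `Q(x 0)(v 0) = 0`), then
`Q(x t)(v t) = 0` for all `t ∈ [0,T]`, i.e. `v(t) ∈ τ_{x(t)}M`. -/
theorem parallel_translation_stays_tangent {N : ℕ} (T : ℝ) (hT : 0 < T)
    (M : Set (EuclideanSpace ℝ (Fin N)))
    (Q : EuclideanSpace ℝ (Fin N) →
      (EuclideanSpace ℝ (Fin N) →L[ℝ] EuclideanSpace ℝ (Fin N)))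
    (hQsmooth : ContDiff ℝ (⊤ : ℕ∞) Q)
    (hQsa : ∀ m ∈ M, IsSelfAdjoint (Q m))
    (hQidem : ∀ m ∈ M, (Q m) ∘L (Q m) = Q m)
    (x : ℝ → EuclideanSpace ℝ (Fin N))
    (hx : ContDiffOn ℝ 1 x (Icc 0 T))
    (hxM : ∀ t ∈ Icc (0 : ℝ) T, x t ∈ M)
    (v : ℝ → EuclideanSpace ℝ (Fin N))
    (hv : ∀ t ∈ Icc (0 : ℝ) T, HasDerivWithinAt v
      (-((derivWithin (fun s => Q (x s)) (Icc 0 T) t) (v t))) (Icc 0 T) t)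
    (hv0 : Q (x 0) (v 0) = 0) :
    ∀ t ∈ Icc (0 : ℝ) T, Q (x t) (v t) = 0 := by
  set A : ℝ → (EuclideanSpace ℝ (Fin N) →L[ℝ] EuclideanSpace ℝ (Fin N)) :=
    fun t => Q (x t) with hAdef
  set A' : ℝ → (EuclideanSpace ℝ (Fin N) →L[ℝ] EuclideanSpace ℝ (Fin N)) :=
    fun t => derivWithin A (Icc 0 T) t with hA'def
  have hUD : UniqueDiffOn ℝ (Icc (0:ℝ) T) := uniqueDiffOn_Icc hT
  have hA : ContDiffOn ℝ 1 A (Icc 0 T) :=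
    (hQsmooth.of_le (by simp)).comp_contDiffOn hx
  have hAd : ∀ t ∈ Icc (0:ℝ) T, HasDerivWithinAt A (A' t) (Icc 0 T) t := fun t ht =>
    ((hA.differentiableOn one_ne_zero) t ht).hasDerivWithinAt
  -- the key identity A' = A' ∘ A + A ∘ A' on [0,T]
  have hkey : ∀ t ∈ Icc (0:ℝ) T,
      A' t = (A' t).comp (A t) + (A t).comp (A' t) := by
    intro t ht
    have h1 : HasDerivWithinAt (fun s => (A s).comp (A s))
        ((A' t).comp (A t) + (A t).comp (A' t)) (Icc 0 T) t :=
      (hAd t ht).clm_comp (hAd t ht)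
    have h2 : HasDerivWithinAt A
        ((A' t).comp (A t) + (A t).comp (A' t)) (Icc 0 T) t := by
      refine h1.congr (fun s hs => ?_) ?_
      · exact (hQidem (x s) (hxM s hs)).symm
      · exact (hQidem (x t) (hxM t ht)).symm
    have := h2.derivWithin (hUD t ht)
    rw [← this]
  -- continuity of A'
  have hA'c : ContinuousOn A' (Icc 0 T) :=
    hA.continuousOn_derivWithin hUD le_rfl
  -- uniform bound on ‖A'‖
  obtain ⟨K, hK⟩ : ∃ K : ℝ, ∀ t ∈ Icc (0:ℝ) T, ‖A' t‖ ≤ K :=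
    (isCompact_Icc.image_of_continuousOn hA'c).isBounded.exists_norm_le.imp
      (fun K hK t ht => hK _ (mem_image_of_mem _ ht))
  -- vector field with projection onto [0,T]
  set π : ℝ → ℝ := fun t => max 0 (min t T) with hπdef
  have hπmem : ∀ t : ℝ, π t ∈ Icc (0:ℝ) T := fun t =>
    ⟨le_max_left _ _, max_le (le_of_lt hT) (min_le_right _ _)⟩
  have hπeq : ∀ t ∈ Icc (0:ℝ) T, π t = t := fun t ht => by
    simp [hπdef, min_eq_left ht.2, max_eq_right ht.1]
  set F : ℝ → EuclideanSpace ℝ (Fin N) → EuclideanSpace ℝ (Fin N) :=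
    fun t y => A' (π t) y with hFdef
  have hLip : ∀ t : ℝ, LipschitzOnWith (Real.toNNReal K) (F t)
      (univ : Set (EuclideanSpace ℝ (Fin N))) := by
    intro t
    have hle : ‖A' (π t)‖₊ ≤ Real.toNNReal K := by
      rw [← NNReal.coe_le_coe]
      exact (hK _ (hπmem t)).trans (le_max_left K 0)
    exact ((A' (π t)).lipschitz.weaken hle).lipschitzOnWith
  set w : ℝ → EuclideanSpace ℝ (Fin N) := fun t => A t (v t) with hwdef
  -- w solves w' = F t w
  have hwd : ∀ t ∈ Icc (0:ℝ) T, HasDerivWithinAt w (F t (w t)) (Icc 0 T) t := by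
    intro t ht
    have h1 : HasDerivWithinAt w (A' t (v t) + A t (-(A' t (v t)))) (Icc 0 T) t :=
      (hAd t ht).clm_apply (hv t ht)
    have h2 : A' t (v t) + A t (-(A' t (v t))) = F t (w t) := by
      have happ := congrArg (fun L : EuclideanSpace ℝ (Fin N) →L[ℝ] EuclideanSpace ℝ (Fin N) =>
        L (v t)) (hkey t ht)
      simp only [ContinuousLinearMap.add_apply, ContinuousLinearMap.comp_apply] at happ
      have hr : F t (w t) = A' t (A t (v t)) := by
        simp [hFdef, hwdef, hπeq t ht]
      rw [map_neg, ← sub_eq_add_neg, hr, sub_eq_iff_eq_add]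
      exact happ
    rwa [h2] at h1
  -- continuity of w
  have hvc : ContinuousOn v (Icc 0 T) := fun t ht =>
    (hv t ht).continuousWithinAt
  have hwc : ContinuousOn w (Icc 0 T) :=
    (hA.continuousOn).clm_apply hvc
  -- uniqueness of ODE solutions: w ≡ 0
  have := ODE_solution_unique_of_mem_Icc_right (fun t _ => hLip t) hwc
    (fun t ht => (hwd t (Ico_subset_Icc_self ht)).mono_of_mem_nhdsWithin (Icc_mem_nhdsGE_of_mem ht))
    (fun t ht => mem_univ _)
    (continuousOn_const : ContinuousOn (fun _ => (0 : EuclideanSpace ℝ (Fin N))) (Icc 0 T))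
    (fun t ht => ?_) (fun t ht => mem_univ _) ?_
  · intro t ht
    have := this ht
    simpa [hwdef, hAdef] using this
  · simpa [hFdef] using hasDerivWithinAt_const t (Ici t) (0 : EuclideanSpace ℝ (Fin N))
  · simpa [hwdef, hAdef] using hv0
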